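/- Let A, B be bounded selfadjoint operators on a complex Hilbert space H with B indefinite, and assume I_≥(A,B) = [λ₋, λ₊] with λ₋ < λ₊. If A + λ₀B has closed range for some λ₀ ∈ (λ₋, λ₊), then A + λB has closed range for every λ ∈ (λ₋, λ₊). -/

import Mathlib

open scoped InnerProductSpace

noncomputable section

variable {H : Type*} [NormedAddCommGroup H] [InnerProductSpace ℂ H] [CompleteSpace H]

/-- The (real) quadratic form associated to an operator. -/
def qf (T : H →L[ℂ] H) (x : H) : ℝ := (⟪T x, x⟫_ℂ).re

/-- Positive semidefinite operator. -/
def PosSemidef (T : H →L[ℂ] H) : Prop := ∀ x, 0 ≤ qf T x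

/-- Positive definite operator (uniformly positive). -/
def PosDef (T : H →L[ℂ] H) : Prop := ∃ α > 0, ∀ x, α * ‖x‖ ^ 2 ≤ qf T x

/-- The set of parameters where the pencil `A + ρ B` is positive semidefinite. -/
def Ige (A B : H →L[ℂ] H) : Set ℝ := {ρ | PosSemidef (A + (ρ : ℂ) • B)}

/-- The set of parameters where the pencil `A + ρ B` is positive definite. -/
def Igt (A B : H →L[ℂ] H) : Set ℝ := {ρ | PosDef (A + (ρ : ℂ) • B)}

/-- An operator is indefinite if its quadratic form takes both signs. -/
def Indefinite (T : H →L[ℂ] H) : Prop := (∃ x, 0 < qf T x) ∧ (∃ x, qf T x < 0)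

/-!
Each form `x ↦ re ⟪(A + ρ B) x, x⟫` is affine in `ρ` and nonnegative at `lm` and `lp`, so for
two interior parameters the two forms dominate positive multiples of each other. For a positive
operator `T`, the open mapping theorem together with `‖T x‖² ≤ ‖T‖ re ⟪T x, x⟫` shows that the
range of `T` is closed exactly when its form is coercive on `(ker T)ᗮ`. Mutually dominating forms
have the same kernel, so coercivity, and with it closedness of the range, passes from `l0` to
every interior `l`.
-/

open Set RCLike

namespace ContinuousLinearMap

variable {𝕜 E : Type*} [RCLike 𝕜] [NormedAddCommGroup E] [InnerProductSpace 𝕜 E]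
  {S T : E →L[𝕜] E}

lemma IsPositive.norm_apply_sq_le (hT : T.IsPositive) (x : E) :
    ‖T x‖ ^ 2 ≤ ‖T‖ * re ⟪T x, x⟫_𝕜 := by
  have hsymm : ⟪T (T x), x⟫_𝕜 = ⟪T x, T x⟫_𝕜 := hT.inner_left_eq_inner_right _ _
  have quadratic : ∀ t : ℝ,
      0 ≤ re ⟪T (T x), T x⟫_𝕜 * (t * t) + 2 * ‖T x‖ ^ 2 * t + re ⟪T x, x⟫_𝕜 := by
    intro t
    have h := hT.re_inner_nonneg_left (x + (t : 𝕜) • T x)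
    simp only [map_add, map_smul, inner_add_left, inner_add_right, inner_smul_left,
      inner_smul_right, conj_ofReal, hsymm, re_ofReal_mul, inner_self_eq_norm_sq] at h
    nlinarith
  have hdisc := discrim_le_zero quadratic
  rw [discrim] at hdisc
  have hTTx : re ⟪T (T x), T x⟫_𝕜 ≤ ‖T‖ * ‖T x‖ ^ 2 :=
    calc re ⟪T (T x), T x⟫_𝕜 ≤ ‖T (T x)‖ * ‖T x‖ := (re_le_norm _).trans (norm_inner_le_norm _ _)
      _ ≤ ‖T‖ * ‖T x‖ * ‖T x‖ := by gcongr; exact T.le_opNorm _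
      _ = ‖T‖ * ‖T x‖ ^ 2 := by ring
  have hq := hT.re_inner_nonneg_left x
  rcases (sq_nonneg ‖T x‖).eq_or_lt with h0 | hpos
  · rw [← h0]; positivity
  · nlinarith [mul_le_mul_of_nonneg_right hTTx hq]

lemma IsPositive.apply_eq_zero_of_re_inner_eq_zero (hT : T.IsPositive) {x : E}
    (hx : re ⟪T x, x⟫_𝕜 = 0) : T x = 0 := by
  have := hT.norm_apply_sq_le x
  rw [hx, mul_zero] at this
  exact norm_eq_zero.mp ((pow_eq_zero_iff two_ne_zero).mp (this.antisymm (sq_nonneg _)))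

lemma IsPositive.ker_le_ker_of_forall_mul_le (hT : T.IsPositive) {d : ℝ} (hd : 0 < d)
    (h : ∀ x, d * re ⟪T x, x⟫_𝕜 ≤ re ⟪S x, x⟫_𝕜) : S.ker ≤ T.ker := fun x hx ↦ by
  have hSx : S x = 0 := hx
  have := h x
  rw [hSx, inner_zero_left, map_zero] at this
  exact hT.apply_eq_zero_of_re_inner_eq_zero
    (le_antisymm (nonpos_of_mul_nonpos_right this hd) (hT.re_inner_nonneg_left x))

variable [CompleteSpace E]

section ClosedRange

variable {F : Type*} [NormedAddCommGroup F] [NormedSpace 𝕜 F]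

lemma range_comp_subtypeL_orthogonal_ker (f : E →L[𝕜] F) :
    (f ∘L f.kerᗮ.subtypeL).range = f.range := by
  refine le_antisymm (LinearMap.range_comp_le_range _ _) ?_
  rintro _ ⟨x, rfl⟩
  obtain ⟨y, hy, z, hz, rfl⟩ := f.ker.exists_add_mem_mem_orthogonal x
  exact ⟨⟨z, hz⟩, by simpa using hy⟩

lemma isClosed_range_iff_exists_norm_le_mul_norm_apply [CompleteSpace F] (f : E →L[𝕜] F) :
    IsClosed (f.range : Set F) ↔ ∃ C, ∀ x ∈ f.kerᗮ, ‖x‖ ≤ C * ‖f x‖ := by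
  have hinj : Function.Injective (f ∘L f.kerᗮ.subtypeL) :=
    (injective_iff_map_eq_zero _).mpr fun x hx ↦
      Subtype.ext (f.ker.orthogonal_disjoint.le_bot ⟨hx, x.2⟩)
  rw [← range_comp_subtypeL_orthogonal_ker, LinearMap.coe_range, coe_coe,
    isClosed_range_iff_antilipschitz_of_injective _ hinj]
  constructor
  · rintro ⟨K, hK⟩
    exact ⟨K, fun x hx ↦ by simpa using hK.le_mul_dist ⟨x, hx⟩ 0⟩
  · rintro ⟨C, hC⟩
    exact ⟨C.toNNReal, antilipschitz_of_bound _ fun x ↦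
      (hC x x.2).trans (by gcongr; exacts [Real.le_coe_toNNReal C, le_rfl])⟩

end ClosedRange

lemma IsPositive.isClosed_range_iff (hT : T.IsPositive) :
    IsClosed (T.range : Set E) ↔ ∃ γ > 0, ∀ x ∈ T.kerᗮ, γ * ‖x‖ ^ 2 ≤ re ⟪T x, x⟫_𝕜 := by
  rw [isClosed_range_iff_exists_norm_le_mul_norm_apply]
  constructor
  · rintro ⟨C, hC⟩
    refine ⟨(C ^ 2 * ‖T‖ + 1)⁻¹, by positivity, fun x hx ↦ ?_⟩
    have hq := hT.re_inner_nonneg_left x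
    have hx' : ‖x‖ ^ 2 ≤ C ^ 2 * ‖T x‖ ^ 2 := by
      rw [← mul_pow]; exact pow_le_pow_left₀ (norm_nonneg x) (hC x hx) 2
    have := hT.norm_apply_sq_le x
    rw [inv_mul_le_iff₀ (by positivity)]
    nlinarith [sq_nonneg C]
  · rintro ⟨γ, hγ, hcoer⟩
    refine ⟨γ⁻¹, fun x hx ↦ ?_⟩
    have h := (hcoer x hx).trans ((re_le_norm _).trans (norm_inner_le_norm (T x) x))
    rw [le_inv_mul_iff₀ hγ]
    rcases (norm_nonneg x).eq_or_lt with h0 | hpos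
    · rw [← h0, mul_zero]; exact norm_nonneg _
    · nlinarith

lemma IsPositive.isClosed_range_of_forall_mul_le (hS : S.IsPositive) (hT : T.IsPositive)
    {c d : ℝ} (hc : 0 < c) (hd : 0 < d) (hST : ∀ x, c * re ⟪S x, x⟫_𝕜 ≤ re ⟪T x, x⟫_𝕜)
    (hTS : ∀ x, d * re ⟪T x, x⟫_𝕜 ≤ re ⟪S x, x⟫_𝕜) (hS_closed : IsClosed (S.range : Set E)) :
    IsClosed (T.range : Set E) := by
  obtain ⟨γ, hγ, hcoer⟩ := hS.isClosed_range_iff.mp hS_closed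
  have hker : T.kerᗮ ≤ S.kerᗮ := Submodule.orthogonal_le (hT.ker_le_ker_of_forall_mul_le hd hTS)
  refine hT.isClosed_range_iff.mpr ⟨c * γ, by positivity, fun x hx ↦ ?_⟩
  calc c * γ * ‖x‖ ^ 2 = c * (γ * ‖x‖ ^ 2) := by ring
    _ ≤ c * re ⟪S x, x⟫_𝕜 := by gcongr; exact hcoer x (hker hx)
    _ ≤ re ⟪T x, x⟫_𝕜 := hST x

end ContinuousLinearMap

lemma exists_pos_mul_le_of_nonneg_at_endpoints {lm lp l l0 : ℝ} (hl : l ∈ Ioo lm lp)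
    (hl0 : l0 ∈ Icc lm lp) :
    ∃ c > 0, ∀ a b : ℝ, 0 ≤ a + lm * b → 0 ≤ a + lp * b → c * (a + l0 * b) ≤ a + l * b := by
  obtain ⟨hml, hlp⟩ := hl
  obtain ⟨hml0, hl0p⟩ := hl0
  set m := min (lp - l) (l - lm)
  have hm : 0 < m := lt_min (by linarith) (by linarith)
  refine ⟨m / (lp - lm), div_pos hm (by linarith), fun a b hu hv ↦ ?_⟩
  -- `(lp - lm) (a + ρ b) = (lp - ρ) (a + lm b) + (ρ - lm) (a + lp b)`
  have upper : (lp - lm) * (a + l0 * b) ≤ (lp - lm) * ((a + lm * b) + (a + lp * b)) := by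
    nlinarith [mul_nonneg (sub_nonneg.mpr hl0p) hu, mul_nonneg (sub_nonneg.mpr hml0) hv]
  have lower : m * ((a + lm * b) + (a + lp * b)) ≤ (lp - lm) * (a + l * b) := by
    nlinarith [mul_le_mul_of_nonneg_right (min_le_left (lp - l) (l - lm)) hu,
      mul_le_mul_of_nonneg_right (min_le_right (lp - l) (l - lm)) hv]
  rw [div_mul_eq_mul_div, div_le_iff₀ (by linarith)]
  nlinarith

section Pencil

variable {E : Type*} [NormedAddCommGroup E] [InnerProductSpace ℂ E] {A B : E →L[ℂ] E}

lemma qf_add_ofReal_smul (A B : E →L[ℂ] E) (ρ : ℝ) (x : E) :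
    qf (A + (ρ : ℂ) • B) x = qf A x + ρ * qf B x := by
  simp only [qf, add_apply, smul_apply, inner_add_left, inner_smul_left, Complex.conj_ofReal,
    Complex.add_re, Complex.re_ofReal_mul]

lemma exists_pos_mul_qf_le_qf {lm lp l l0 : ℝ} (hI : Ige A B = Icc lm lp) (hl : l ∈ Ioo lm lp)
    (hl0 : l0 ∈ Icc lm lp) :
    ∃ c > 0, ∀ x, c * qf (A + (l0 : ℂ) • B) x ≤ qf (A + (l : ℂ) • B) x := by
  obtain ⟨c, hc, hle⟩ := exists_pos_mul_le_of_nonneg_at_endpoints hl hl0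
  refine ⟨c, hc, fun x ↦ ?_⟩
  have hm := hI.ge (left_mem_Icc.mpr (hl.1.trans hl.2).le) x
  have hp := hI.ge (right_mem_Icc.mpr (hl.1.trans hl.2).le) x
  simp only [qf_add_ofReal_smul] at hm hp ⊢
  exact hle _ _ hm hp

lemma isPositive_of_mem_Ige [CompleteSpace E] (hA : IsSelfAdjoint A) (hB : IsSelfAdjoint B)
    {ρ : ℝ} (hρ : ρ ∈ Ige A B) : (A + (ρ : ℂ) • B).IsPositive :=
  ContinuousLinearMap.isPositive_def'.mpr
    ⟨hA.add (IsSelfAdjoint.smul (Complex.conj_ofReal ρ) hB), hρ⟩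

end Pencil

theorem stmt12_general (A B : H →L[ℂ] H) (hA : IsSelfAdjoint A) (hB : IsSelfAdjoint B)
    (lm lp : ℝ) (hI : Ige A B = Set.Icc lm lp)
    (l0 : ℝ) (hl0 : l0 ∈ Set.Ioo lm lp)
    (hclosed : IsClosed (LinearMap.range ((A + (l0 : ℂ) • B : H →L[ℂ] H) : H →ₗ[ℂ] H) : Set H)) :
    ∀ l ∈ Set.Ioo lm lp, IsClosed (LinearMap.range ((A + (l : ℂ) • B : H →L[ℂ] H) : H →ₗ[ℂ] H) : Set H) := by
  intro l hl
  have hpos : ∀ ρ ∈ Ioo lm lp, (A + (ρ : ℂ) • B).IsPositive := fun ρ hρ ↦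
    isPositive_of_mem_Ige hA hB (hI ▸ Ioo_subset_Icc_self hρ)
  obtain ⟨c, hc, hle⟩ := exists_pos_mul_qf_le_qf hI hl (Ioo_subset_Icc_self hl0)
  obtain ⟨d, hd, hge⟩ := exists_pos_mul_qf_le_qf hI hl0 (Ioo_subset_Icc_self hl)
  exact (hpos l0 hl0).isClosed_range_of_forall_mul_le (hpos l hl) hc hd hle hge hclosed

theorem stmt12 (A B : H →L[ℂ] H) (hA : IsSelfAdjoint A) (hB : IsSelfAdjoint B)
    (hBind : Indefinite B)
    (lm lp : ℝ) (hlt : lm < lp) (hI : Ige A B = Set.Icc lm lp)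
    (l0 : ℝ) (hl0 : l0 ∈ Set.Ioo lm lp)
    (hclosed : IsClosed (LinearMap.range ((A + (l0 : ℂ) • B : H →L[ℂ] H) : H →ₗ[ℂ] H) : Set H)) :
    ∀ l ∈ Set.Ioo lm lp, IsClosed (LinearMap.range ((A + (l : ℂ) • B : H →L[ℂ] H) : H →ₗ[ℂ] H) : Set H) :=
  stmt12_general A B hA hB lm lp hI l0 hl0 hclosed
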